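/- Let x ∈ (0,1) be irrational and let t_1 < t_2 < ⋯ be the increasing enumeration of the (infinite) set {n ≥ 0 : b_{n+1} ≥ 3}. Then q*_{t_{k+1}} ≥ 2·q*_{t_k} for all k ≥ 1, and consequently Σ_{n ≥ 0, b_{n+1} ≥ 3} 1/q*_n ≤ 2. -/

import Mathlib

open Set Filter
open scoped ENNReal

/-- The by-excess continued fraction map `A_0(x) = ⌊1/x + 1⌋ − 1/x`. -/
noncomputable def exm (x : ℝ) : ℝ := ⌊1 / x + 1⌋ - 1 / x

/-- `bEx x n = b_{n+1} = ⌊1/A_0^n(x) + 1⌋`, the by-excess digits of `x`. -/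
noncomputable def bEx (x : ℝ) (n : ℕ) : ℤ := ⌊1 / (exm^[n] x) + 1⌋

/-- `qstar x (n+1) = q*_n`, with `q*_{-1} = 0`, `q*_0 = 1` and
`q*_n = b_n·q*_{n−1} − q*_{n−2}`. -/
noncomputable def qstar (x : ℝ) : ℕ → ℤ
  | 0 => 0
  | 1 => 1
  | n + 2 => bEx x n * qstar x (n + 1) - qstar x n

/-!
Every digit `b_n` is at least `2`, so `q*` is strictly increasing, and a digit `b_{n+1} ≥ 3`
gives `q*_{n+1} ≥ 3 q*_n − q*_{n−1} ≥ 2 q*_n`. Hence `q*` at least doubles from one index of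
`{n : b_{n+1} ≥ 3}` to the next, so `q*_{t_k} ≥ 2^{k-1}` and the sum is dominated by `∑ 2^{-k} = 2`.
-/

lemma exm_eq_one_sub_fract (x : ℝ) : exm x = 1 - Int.fract (1 / x) := by
  rw [exm, Int.floor_add_one, Int.fract]
  push_cast
  ring

lemma irrational_exm {x : ℝ} (hx : Irrational x) : Irrational (exm x) := by
  rw [exm, one_div]
  exact hx.inv.intCast_sub _

lemma exm_mem_Ioo {x : ℝ} (hx : Irrational x) : exm x ∈ Ioo (0 : ℝ) 1 := by
  have hfract_pos : 0 < Int.fract (1 / x) :=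
    Int.fract_pos.mpr fun h => (one_div x ▸ hx.inv).ne_int _ h
  rw [exm_eq_one_sub_fract]
  constructor <;> linarith [Int.fract_lt_one (1 / x)]

lemma irrational_iterate_exm {x : ℝ} (hx : Irrational x) (n : ℕ) : Irrational (exm^[n] x) := by
  induction n with
  | zero => exact hx
  | succ n ih => rw [Function.iterate_succ_apply']; exact irrational_exm ih

lemma iterate_exm_mem_Ioo {x : ℝ} (hirr : Irrational x) (hx : x ∈ Ioo (0 : ℝ) 1) :
    ∀ n, exm^[n] x ∈ Ioo (0 : ℝ) 1
  | 0 => hx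
  | n + 1 => by rw [Function.iterate_succ_apply']; exact exm_mem_Ioo (irrational_iterate_exm hirr n)

lemma two_le_floor_one_div_add_one {y : ℝ} (hy : y ∈ Ioo (0 : ℝ) 1) : 2 ≤ ⌊1 / y + 1⌋ := by
  have : 1 < 1 / y := by rw [lt_div_iff₀ hy.1]; linarith [hy.2]
  exact Int.le_floor.mpr (by push_cast; linarith)

lemma two_le_bEx {x : ℝ} (hirr : Irrational x) (hx : x ∈ Ioo (0 : ℝ) 1) (n : ℕ) :
    2 ≤ bEx x n :=
  two_le_floor_one_div_add_one (iterate_exm_mem_Ioo hirr hx n)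

section Digits

variable {x : ℝ}

lemma qstar_add_two (n : ℕ) : qstar x (n + 2) = bEx x n * qstar x (n + 1) - qstar x n := rfl

lemma qstar_nonneg_and_lt_succ (hb : ∀ n, 2 ≤ bEx x n) (n : ℕ) :
    0 ≤ qstar x n ∧ qstar x n < qstar x (n + 1) := by
  induction n with
  | zero => simp [qstar]
  | succ n ih =>
    obtain ⟨hq_nonneg, hq_lt⟩ := ih
    refine ⟨by linarith, ?_⟩
    rw [qstar_add_two]
    nlinarith [hb n]

lemma qstar_strictMono (hb : ∀ n, 2 ≤ bEx x n) : StrictMono (qstar x) :=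
  strictMono_nat_of_lt_succ fun n => (qstar_nonneg_and_lt_succ hb n).2

lemma two_mul_qstar_le_qstar_add_two (hb : ∀ n, 2 ≤ bEx x n) {n : ℕ} (hn : 3 ≤ bEx x n) :
    2 * qstar x (n + 1) ≤ qstar x (n + 2) := by
  obtain ⟨hq_nonneg, hq_lt⟩ := qstar_nonneg_and_lt_succ hb n
  rw [qstar_add_two]
  nlinarith

lemma two_mul_qstar_le_of_lt (hb : ∀ n, 2 ≤ bEx x n) {m n : ℕ} (hm : 3 ≤ bEx x m)
    (hmn : m < n) : 2 * qstar x (m + 1) ≤ qstar x (n + 1) :=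
  (two_mul_qstar_le_qstar_add_two hb hm).trans ((qstar_strictMono hb).monotone (by omega))

end Digits

lemma two_pow_le_of_two_mul_le {u : ℕ → ℤ} (h0 : 1 ≤ u 0) (h : ∀ k, 2 * u k ≤ u (k + 1)) :
    ∀ k, 2 ^ k ≤ u k
  | 0 => by simpa using h0
  | k + 1 => by rw [pow_succ']; linarith [two_pow_le_of_two_mul_le h0 h k, h k]

lemma tsum_ofReal_one_div_le_two {u : ℕ → ℤ} (h : ∀ k, 2 ^ k ≤ u k) :
    ∑' k, ENNReal.ofReal (1 / (u k : ℝ)) ≤ 2 := by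
  have hterm (k : ℕ) : ENNReal.ofReal (1 / (u k : ℝ)) ≤ 2⁻¹ ^ k := by
    have hu : (2 : ℝ) ^ k ≤ u k := by exact_mod_cast h k
    rw [← ENNReal.ofReal_ofNat 2, ← ENNReal.ofReal_inv_of_pos two_pos,
      ← ENNReal.ofReal_pow (by norm_num), inv_pow, one_div]
    exact ENNReal.ofReal_le_ofReal (inv_anti₀ (by positivity) hu)
  exact (ENNReal.tsum_le_tsum hterm).trans ENNReal.tsum_geometric_two.le

/-- Let `x ∈ (0,1)` be irrational and let `t_1 < t_2 < ⋯` enumerate the (infinite)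
set `{n ≥ 0 : b_{n+1} ≥ 3}` (here `t k` is the paper's `t_{k+1}`). Then
`q*_{t_{k+1}} ≥ 2·q*_{t_k}` for all `k ≥ 1`, and consequently
`∑_{n ≥ 0, b_{n+1} ≥ 3} 1/q*_n ≤ 2`. -/
theorem qstar_doubling_and_sum_le_two (x : ℝ) (hirr : Irrational x)
    (hx : x ∈ Set.Ioo (0 : ℝ) 1) (t : ℕ → ℕ) (hmono : StrictMono t)
    (hmem : ∀ k, 3 ≤ bEx x (t k))
    (hall : ∀ n : ℕ, 3 ≤ bEx x n → ∃ k, t k = n) :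
    (∀ k : ℕ, 2 * qstar x (t k + 1) ≤ qstar x (t (k + 1) + 1)) ∧
      (∑' n : ℕ, if 3 ≤ bEx x n then ENNReal.ofReal (1 / (qstar x (n + 1) : ℝ)) else 0) ≤ 2 := by
  have hb := two_le_bEx hirr hx
  have hdouble (k : ℕ) : 2 * qstar x (t k + 1) ≤ qstar x (t (k + 1) + 1) :=
    two_mul_qstar_le_of_lt hb (hmem k) (hmono k.lt_succ_self)
  refine ⟨hdouble, ?_⟩
  have hsupp : (Function.support fun n =>
      if 3 ≤ bEx x n then ENNReal.ofReal (1 / (qstar x (n + 1) : ℝ)) else 0) ⊆ range t := by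
    intro n hn
    by_contra hnt
    exact hn (if_neg fun h3 => hnt (hall n h3))
  rw [← hmono.injective.tsum_eq hsupp]
  simp only [hmem, if_true]
  refine tsum_ofReal_one_div_le_two (two_pow_le_of_two_mul_le ?_ hdouble)
  exact (qstar_strictMono hb).monotone (Nat.succ_le_succ (Nat.zero_le _))
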